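/- Let A be the wave operator A = [[0, I], [Δ, 0]] on T³ and let Π_{τ^{-1}} = diag(π_{τ^{-1}}, π_{τ^{-1}}) be the frequency cutoff at level τ^{-1}. For every τ ∈ (0,1] there exists an operator Ψ_τ, bounded on H^r × H^{r−1} uniformly in τ for every r ∈ ℝ, such that τ A Π_{τ^{-1}} = (e^{τA} − I) Ψ_τ. Explicitly, Ψ_τ = −(τ/2) Π_{τ^{-1}} [[ |∇| sin(τ|∇|)/(cos(τ|∇|) − I), I ], [ Δ, |∇| sin(τ|∇|)/(cos(τ|∇|) − I) ]], and its uniform boundedness follows from the boundedness of x ↦ x sin x/(cos x − 1) on [0, √3]. -/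

import Mathlib

open scoped BigOperators

/-- Euclidean norm `|k|` of a frequency `k ∈ ℤ³`. -/
noncomputable def knrm (k : Fin 3 → ℤ) : ℝ := Real.sqrt (∑ i, ((k i : ℝ))^2)

/-- `|k|_∞`, the sup-norm of a frequency, as a real number. -/
noncomputable def kinf (k : Fin 3 → ℤ) : ℝ := ((Finset.univ.sup fun i => (k i).natAbs : ℕ) : ℝ)

/-- The Fourier symbol of the multiplier `t sinc(t|∇|)` at frequency of modulus `r`. -/
noncomputable def tsinc (t r : ℝ) : ℝ := if r = 0 then t else Real.sin (t*r) / r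

/-- The symbol of the wave group `e^{tA}`. -/
noncomputable def Ehat (t : ℝ) (k : Fin 3 → ℤ) : Matrix (Fin 2) (Fin 2) ℝ :=
  !![Real.cos (t * knrm k), tsinc t (knrm k);
     -(knrm k) * Real.sin (t * knrm k), Real.cos (t * knrm k)]

/-- The symbol of the wave operator `A = [[0, I], [Δ, 0]]`. -/
noncomputable def Ahat (k : Fin 3 → ℤ) : Matrix (Fin 2) (Fin 2) ℝ :=
  !![0, 1; -(knrm k)^2, 0]

/-- The continuous extension of `x ↦ x sin x/(cos x − 1)` (value `−2` at `0`), which is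
bounded on `[0, √3]`. -/
noncomputable def rho (x : ℝ) : ℝ := if x = 0 then -2 else x * Real.sin x / (Real.cos x - 1)

/-- The symbol of the operator
`Ψ_τ = −(τ/2) Π_{τ^{-1}} [[ |∇| sin(τ|∇|)/(cos(τ|∇|) − I), I ], [ Δ, |∇| sin(τ|∇|)/(cos(τ|∇|) − I) ]]`;
the diagonal multiplier at mode `k` equals `ρ(τ|k|)/τ`. -/
noncomputable def Psihat (τ : ℝ) (k : Fin 3 → ℤ) : Matrix (Fin 2) (Fin 2) ℝ :=
  if kinf k ≤ 1/τ then
    (-(τ/2)) • !![rho (τ * knrm k) / τ, 1; -(knrm k)^2, rho (τ * knrm k) / τ]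
  else 0

/-! At a mode with `|k|_∞ ≤ 1/τ` the phase `x = τ|k|` lies in `[0, √3]`. For `x ≠ 0` the
factorization is the `2 × 2` identity `(cos x − 1)² + sin² x = 2 (1 − cos x)`, legitimate because
`cos x ≠ 1` on `(0, 2π)`. The diagonal entry `−ρ(x)/2` of `Ψ̂_τ` is bounded since
`ρ(x) = −x cot(x/2)` and `0 < y cot y ≤ 1` on `(0, π/2)` (`y ≤ tan y`); the off-diagonal entries
`−τ/2` and `τ|k|²/2` are controlled by `τ ≤ 1` and `τ|k| ≤ √3`. -/

open Real

lemma knrm_nonneg (k : Fin 3 → ℤ) : 0 ≤ knrm k := Real.sqrt_nonneg _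

lemma kinf_nonneg (k : Fin 3 → ℤ) : 0 ≤ kinf k := Nat.cast_nonneg _

lemma sq_le_kinf_sq (k : Fin 3 → ℤ) (i : Fin 3) : (k i : ℝ) ^ 2 ≤ kinf k ^ 2 := by
  have h : ((k i).natAbs : ℝ) ≤ kinf k := by
    unfold kinf
    exact_mod_cast Finset.le_sup (f := fun i => (k i).natAbs) (Finset.mem_univ i)
  rw [← sq_abs, ← Int.cast_abs, ← Nat.cast_natAbs]
  gcongr

lemma knrm_le_sqrt_three_mul_kinf (k : Fin 3 → ℤ) : knrm k ≤ √3 * kinf k := by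
  have hsum : ∑ i, (k i : ℝ) ^ 2 ≤ 3 * kinf k ^ 2 := by
    simpa using Finset.sum_le_sum fun i (_ : i ∈ Finset.univ) => sq_le_kinf_sq k i
  calc knrm k ≤ √(3 * kinf k ^ 2) := Real.sqrt_le_sqrt hsum
    _ = √3 * kinf k := by rw [Real.sqrt_mul zero_le_three, Real.sqrt_sq (kinf_nonneg k)]

lemma sqrt_three_lt_two : √3 < 2 := (Real.sqrt_lt' two_pos).2 (by norm_num)

lemma mul_knrm_le_sqrt_three {τ : ℝ} (hτ : 0 < τ) {k : Fin 3 → ℤ} (hk : kinf k ≤ 1 / τ) :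
    τ * knrm k ≤ √3 :=
  calc τ * knrm k ≤ τ * (√3 * (1 / τ)) := by
        gcongr
        exact (knrm_le_sqrt_three_mul_kinf k).trans (by gcongr)
    _ = √3 := by field_simp

lemma mul_knrm_lt_pi {τ : ℝ} (hτ : 0 < τ) {k : Fin 3 → ℤ} (hk : kinf k ≤ 1 / τ) :
    τ * knrm k < π :=
  (mul_knrm_le_sqrt_three hτ hk).trans_lt (sqrt_three_lt_two.trans_le two_le_pi)

lemma rho_two_mul {y : ℝ} (hy : y ≠ 0) : rho (2 * y) = -(2 * y * cos y / sin y) := by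
  rw [rho, if_neg (mul_ne_zero two_ne_zero hy), sin_two_mul, cos_two_mul', cos_sq',
    show 1 - sin y ^ 2 - sin y ^ 2 - 1 = -(2 * sin y ^ 2) by ring]
  rcases eq_or_ne (sin y) 0 with hs | hs
  · simp [hs]
  · field_simp

lemma abs_rho_le_two {x : ℝ} (hx0 : 0 ≤ x) (hxπ : x < π) : |rho x| ≤ 2 := by
  rcases hx0.eq_or_lt with rfl | hx0
  · simp [rho]
  obtain ⟨y, rfl⟩ : ∃ y, x = 2 * y := ⟨x / 2, by ring⟩
  have hy0 : 0 < y := by linarith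
  have hyπ : y < π / 2 := by linarith
  have hs : 0 < sin y := sin_pos_of_pos_of_lt_pi hy0 (by linarith)
  have hc : 0 < cos y := cos_pos_of_mem_Ioo ⟨by linarith, hyπ⟩
  have hy_cos_le_sin : y * cos y ≤ sin y := by
    have := lt_tan hy0 hyπ
    rw [tan_eq_sin_div_cos, lt_div_iff₀ hc] at this
    exact this.le
  rw [rho_two_mul hy0.ne', abs_neg, abs_of_nonneg (by positivity), div_le_iff₀ hs]
  linarith

lemma wave_symbol_factorization {τ r : ℝ} (hτ : τ ≠ 0) (hc : r ≠ 0 → cos (τ * r) ≠ 1) :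
    τ • !![0, 1; -r ^ 2, 0] =
      (!![cos (τ * r), tsinc τ r; -r * sin (τ * r), cos (τ * r)] - 1) *
        (-(τ / 2)) • !![rho (τ * r) / τ, 1; -r ^ 2, rho (τ * r) / τ] := by
  rw [Matrix.one_fin_two, Matrix.mul_smul, Matrix.of_sub_of]
  simp only [Matrix.smul_of, Matrix.smul_cons, smul_eq_mul, Matrix.smul_empty,
    Matrix.cons_sub_cons, Matrix.empty_sub_empty, Matrix.mul_fin_two,
    EmbeddingLike.apply_eq_iff_eq, Matrix.vecCons_inj, and_true]
  rcases eq_or_ne r 0 with rfl | hr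
  · simp only [tsinc, rho, mul_zero, if_pos, cos_zero, sin_zero]
    refine ⟨⟨?_, ?_⟩, ?_, ?_⟩ <;> field_simp <;> ring
  rw [tsinc, if_neg hr, rho, if_neg (mul_ne_zero hτ hr)]
  have hpy := sin_sq_add_cos_sq (τ * r)
  have hc1 : cos (τ * r) - 1 ≠ 0 := sub_ne_zero.2 (hc hr)
  generalize cos (τ * r) = c at hc1 hpy ⊢
  generalize sin (τ * r) = s at hpy ⊢
  refine ⟨⟨?_, ?_⟩, ?_, ?_⟩ <;> field_simp
  · ring
  · linear_combination hpy
  · linear_combination -r * hpy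
  · ring

lemma smul_Ahat_eq_sub_one_mul_Psihat {τ : ℝ} (hτ : 0 < τ) {k : Fin 3 → ℤ}
    (hk : kinf k ≤ 1 / τ) : τ • Ahat k = (Ehat τ k - 1) * Psihat τ k := by
  rw [Ahat, Ehat, Psihat, if_pos hk]
  refine wave_symbol_factorization hτ.ne' fun hr hcos => hr ?_
  have hpos : 0 < τ * knrm k := mul_pos hτ ((knrm_nonneg k).lt_of_ne' hr)
  have hlt : τ * knrm k < 2 * π := (mul_knrm_lt_pi hτ hk).trans (by linarith [pi_pos])
  exact absurd ((cos_eq_one_iff_of_lt_of_lt (by linarith) hlt).1 hcos) hpos.ne'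

lemma Psihat_eq_of_le {τ : ℝ} (hτ : τ ≠ 0) {k : Fin 3 → ℤ} (hk : kinf k ≤ 1 / τ) :
    Psihat τ k = !![-(rho (τ * knrm k) / 2), -(τ / 2);
      τ * knrm k ^ 2 / 2, -(rho (τ * knrm k) / 2)] := by
  rw [Psihat, if_pos hk]
  simp only [Matrix.smul_of, Matrix.smul_cons, smul_eq_mul, Matrix.smul_empty,
    EmbeddingLike.apply_eq_iff_eq, Matrix.vecCons_inj, and_true]
  refine ⟨⟨?_, ?_⟩, ?_, ?_⟩ <;> field_simp

lemma Psihat_eq_zero_of_not_le {τ : ℝ} {k : Fin 3 → ℤ} (hk : ¬ kinf k ≤ 1 / τ) :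
    Psihat τ k = 0 :=
  if_neg hk

lemma abs_Psihat_diag_le_one {τ : ℝ} (hτ : 0 < τ) (k : Fin 3 → ℤ) (i : Fin 2) :
    |Psihat τ k i i| ≤ 1 := by
  by_cases hk : kinf k ≤ 1 / τ
  · have hρ := abs_rho_le_two (by positivity [knrm_nonneg k]) (mul_knrm_lt_pi hτ hk)
    have h : |-(rho (τ * knrm k) / 2)| ≤ 1 := by
      rw [abs_neg, abs_div, abs_two]
      linarith
    rw [Psihat_eq_of_le hτ.ne' hk]
    fin_cases i <;> exact h
  · rw [Psihat_eq_zero_of_not_le hk, Matrix.zero_apply, abs_zero]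
    exact zero_le_one

lemma abs_Psihat_zero_one_le {τ : ℝ} (hτ : 0 < τ) (hτ1 : τ ≤ 1) (k : Fin 3 → ℤ) :
    |Psihat τ k 0 1| ≤ 2 / √(1 + knrm k ^ 2) := by
  by_cases hk : kinf k ≤ 1 / τ
  · have hsqrt_le : √(1 + knrm k ^ 2) ≤ 1 + knrm k :=
      Real.sqrt_le_iff.2 ⟨by positivity [knrm_nonneg k], by nlinarith [knrm_nonneg k]⟩
    have hx := mul_knrm_le_sqrt_three hτ hk
    rw [Psihat_eq_of_le hτ.ne' hk]
    change |-(τ / 2)| ≤ _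
    rw [abs_neg, abs_of_pos (half_pos hτ), le_div_iff₀ (by positivity)]
    nlinarith [mul_le_mul_of_nonneg_left hsqrt_le hτ.le, sqrt_three_lt_two]
  · rw [Psihat_eq_zero_of_not_le hk, Matrix.zero_apply, abs_zero]
    positivity

lemma abs_Psihat_one_zero_le {τ : ℝ} (hτ : 0 < τ) (k : Fin 3 → ℤ) :
    |Psihat τ k 1 0| ≤ 2 * √(1 + knrm k ^ 2) := by
  by_cases hk : kinf k ≤ 1 / τ
  · have hr := knrm_nonneg k
    have hr_le : knrm k ≤ √(1 + knrm k ^ 2) := Real.le_sqrt_of_sq_le (by linarith)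
    have hx := mul_knrm_le_sqrt_three hτ hk
    rw [Psihat_eq_of_le hτ.ne' hk]
    change |τ * knrm k ^ 2 / 2| ≤ _
    rw [abs_of_nonneg (by positivity)]
    calc τ * knrm k ^ 2 / 2 = τ * knrm k * knrm k / 2 := by ring
      _ ≤ √3 * knrm k / 2 := by gcongr
      _ ≤ 2 * √(1 + knrm k ^ 2) := by nlinarith [sqrt_three_lt_two]
  · rw [Psihat_eq_zero_of_not_le hk, Matrix.zero_apply, abs_zero]
    positivity

/-- Uniform boundedness of `Ψ_τ` on `H^r × H^{r−1}` is encoded by mode-wise entry bounds with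
weight `⟨k⟩ = (1+|k|²)^{1/2}`. -/
theorem stmt12 :
    ∃ C > (0:ℝ), ∀ τ : ℝ, 0 < τ → τ ≤ 1 → ∀ k : Fin 3 → ℤ,
      ((if kinf k ≤ 1/τ then τ • Ahat k else 0) = (Ehat τ k - 1) * Psihat τ k) ∧
      |Psihat τ k 0 0| ≤ C ∧ |Psihat τ k 1 1| ≤ C ∧
      |Psihat τ k 0 1| ≤ C / Real.sqrt (1 + (knrm k)^2) ∧
      |Psihat τ k 1 0| ≤ C * Real.sqrt (1 + (knrm k)^2) := by
  refine ⟨2, two_pos, fun τ hτ hτ1 k => ⟨?_, ?_, ?_, abs_Psihat_zero_one_le hτ hτ1 k,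
    abs_Psihat_one_zero_le hτ k⟩⟩
  · split_ifs with hk
    · exact smul_Ahat_eq_sub_one_mul_Psihat hτ hk
    · rw [Psihat_eq_zero_of_not_le hk, mul_zero]
  · exact (abs_Psihat_diag_le_one hτ k 0).trans one_le_two
  · exact (abs_Psihat_diag_le_one hτ k 1).trans one_le_two
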